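/- arXiv:1408.1922 — 5 statements merged into one kernel-verified Lean document; each statement's English description precedes it below -/
import Mathlib

section
/- Let Q_i = diag(w) T_i with T_i = R C_i (C_i permutations on ℂ^{n²}, R restriction), and define 𝒬²_i = T_i (Σ_j Q_j* Q_j) T_i*. Then 𝒬²_i = diag(T_i T* S |w|²), where T* S |w|² := Σ_j T_j* |w|²; in particular each 𝒬²_i is a diagonal matrix with nonnegative entries. -/
open Matrix BigOperators
open scoped ComplexOrder

noncomputable section

/-- Restriction matrix extracting the first `m` coordinates of `ℂ^n`. -/
def restrictM (m n : ℕ) : Matrix (Fin m) (Fin n) ℂ :=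
  Matrix.of fun i j => if (i : ℕ) = (j : ℕ) then 1 else 0

/-- Permutation matrix of `σ` acting on `ℂ^n`. -/
def permM {n : ℕ} (σ : Equiv.Perm (Fin n)) : Matrix (Fin n) (Fin n) ℂ :=
  Matrix.of fun i j => if σ j = i then 1 else 0

/-- K-fold stacking matrix: K copies of the identity stacked vertically. -/
def stackM (K m : ℕ) : Matrix (Fin K × Fin m) (Fin m) ℂ :=
  Matrix.of fun p j => if p.2 = j then 1 else 0

/-- Stacked frame-extraction matrix with blocks `T_i = R C_i`. -/
def Tstack (K m n : ℕ) (σ : Fin K → Equiv.Perm (Fin n)) :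
    Matrix (Fin K × Fin m) (Fin n) ℂ :=
  Matrix.of fun p j => (restrictM m n * permM (σ p.1)) p.2 j

/-!
Each frame extraction `T_i = R C_i` is the matrix of a partial bijection `Fin m ≃. Fin n`: its
entries are `0` or `1`, with at most one `1` in every row and every column. Conjugating a
diagonal matrix by such a matrix yields a diagonal matrix again, `Tᴴ diag(d) T = diag(Tᴴ d)` and
`T diag(u) Tᴴ = diag(T u)`. Applied to `Q_jᴴ Q_j = T_jᴴ diag(|w|²) T_j` and then to `T_i`, this
gives the formula; the entries are nonnegative because `|w|² ≥ 0` and `T` has `0/1` entries.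
-/

namespace PEquiv

variable {m n α : Type*} [DecidableEq m]

theorem toMatrix_mulVec_apply [Fintype m] [NonAssocSemiring α] (f : n ≃. m) (v : m → α) (i : n) :
    (f.toMatrix *ᵥ v) i = Option.casesOn (f i) 0 v := by
  rcases h : f i with - | fi <;> simp [mulVec, dotProduct, h]

theorem toMatrix_mulVec_nonneg [Fintype m] [Semiring α] [PartialOrder α] [IsOrderedRing α]
    (f : n ≃. m) {v : m → α} (hv : 0 ≤ v) : 0 ≤ f.toMatrix *ᵥ v := by
  intro i
  rw [toMatrix_mulVec_apply]
  cases f i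
  · exact le_rfl
  · exact hv _

variable [DecidableEq n]

theorem conjTranspose_toMatrix [NonAssocSemiring α] [StarRing α] (f : m ≃. n) :
    (f.toMatrix : Matrix m n α)ᴴ = f.symm.toMatrix := by
  rw [toMatrix_symm]
  ext i j
  simp [apply_ite star]

theorem symm_toMatrix_mul_diagonal_mul_toMatrix [Fintype m] [Fintype n] [Semiring α]
    (f : m ≃. n) (d : m → α) :
    (f.symm.toMatrix : Matrix n m α) * diagonal d * (f.toMatrix : Matrix m n α) =
      diagonal (f.symm.toMatrix *ᵥ d) := by
  ext b c
  rw [Matrix.mul_assoc, toMatrix_mul_apply, diagonal_apply, toMatrix_mulVec_apply]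
  rcases h : f.symm b with - | a
  · simp
  · rw [f.eq_some_iff] at h
    simp [h]

end PEquiv

def Fin.castPEquiv (m n : ℕ) : Fin m ≃. Fin n where
  toFun a := if h : (a : ℕ) < n then some ⟨a, h⟩ else none
  invFun b := if h : (b : ℕ) < m then some ⟨b, h⟩ else none
  inv a b := by
    simp only [Option.dite_none_right_eq_some, Option.some.injEq, Fin.ext_iff]
    have := a.2
    have := b.2
    constructor <;> rintro ⟨-, h⟩ <;> exact ⟨by omega, h.symm⟩

theorem restrictM_eq_toMatrix (m n : ℕ) : restrictM m n = (Fin.castPEquiv m n).toMatrix := by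
  ext a b
  by_cases h : (a : ℕ) < n
  · simp [restrictM, Fin.castPEquiv, h, Fin.ext_iff]
  · have hab : (a : ℕ) ≠ b := by omega
    simp [restrictM, Fin.castPEquiv, h, hab]

theorem permM_eq_toMatrix {n : ℕ} (σ : Equiv.Perm (Fin n)) : permM σ = σ.symm.toPEquiv.toMatrix := by
  ext i j
  simp only [permM, of_apply, PEquiv.toMatrix_apply, Equiv.toPEquiv_apply, Option.mem_def,
    Option.some.injEq, Equiv.symm_apply_eq, eq_comm (a := i)]

theorem restrictM_mul_permM {m n : ℕ} (σ : Equiv.Perm (Fin n)) :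
    restrictM m n * permM σ = ((Fin.castPEquiv m n).trans σ.symm.toPEquiv).toMatrix := by
  rw [restrictM_eq_toMatrix, permM_eq_toMatrix, PEquiv.toMatrix_trans]

theorem conjTranspose_diagonal_mul_mul_self {l m α : Type*} [Fintype l] [DecidableEq l]
    [CommSemiring α] [StarRing α] (w : l → α) (A : Matrix l m α) :
    (diagonal w * A)ᴴ * (diagonal w * A) = Aᴴ * diagonal (star w * w) * A := by
  rw [conjTranspose_mul, diagonal_conjTranspose, Matrix.mul_assoc, ← Matrix.mul_assoc (diagonal _),
    diagonal_mul_diagonal, ← Matrix.mul_assoc]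
  rfl

theorem stmt7_general {K m n : ℕ} (σ : Fin K → Equiv.Perm (Fin n))
    (w : Fin m → ℂ)
    (T : Fin K → Matrix (Fin m) (Fin n) ℂ)
    (hT : ∀ i, T i = restrictM m n * permM (σ i))
    (Q : Fin K → Matrix (Fin m) (Fin n) ℂ)
    (hQ : ∀ i, Q i = Matrix.diagonal w * T i)
    (i : Fin K) :
    T i * (∑ j : Fin K, (Q j)ᴴ * Q j) * (T i)ᴴ =
      Matrix.diagonal
        ((T i).mulVec (∑ j : Fin K, (T j)ᴴ.mulVec (fun k => (‖w k‖ : ℂ) ^ 2))) ∧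
    ∀ k, 0 ≤ ((T i).mulVec (∑ j : Fin K, (T j)ᴴ.mulVec (fun k => (‖w k‖ : ℂ) ^ 2))) k := by
  set d : Fin m → ℂ := fun k => (‖w k‖ : ℂ) ^ 2
  have hd : star w * w = d := funext fun k => Complex.conj_mul' (w k)
  set f : Fin K → Fin m ≃. Fin n := fun j => (Fin.castPEquiv m n).trans (σ j).symm.toPEquiv
  have hTf : ∀ j, T j = (f j).toMatrix := fun j => (hT j).trans (restrictM_mul_permM _)
  have hsum : ∑ j, (Q j)ᴴ * Q j = diagonal (∑ j, (T j)ᴴ *ᵥ d) := by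
    simp only [hQ, conjTranspose_diagonal_mul_mul_self, hd, hTf, PEquiv.conjTranspose_toMatrix,
      PEquiv.symm_toMatrix_mul_diagonal_mul_toMatrix]
    exact (map_sum (diagonalAddMonoidHom (Fin n) ℂ) _ _).symm
  have hd_nonneg : 0 ≤ d := fun k => show 0 ≤ d k by
    simpa only [d, ← Complex.ofReal_pow] using Complex.zero_le_real.mpr (sq_nonneg ‖w k‖)
  refine ⟨?_, ?_⟩
  · rw [hsum, hTf i, PEquiv.conjTranspose_toMatrix]
    simpa using PEquiv.symm_toMatrix_mul_diagonal_mul_toMatrix (f i).symm _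
  · rw [hTf i]
    refine PEquiv.toMatrix_mulVec_nonneg _ (Finset.sum_nonneg fun j _ => ?_)
    rw [hTf j, PEquiv.conjTranspose_toMatrix]
    exact PEquiv.toMatrix_mulVec_nonneg _ hd_nonneg

theorem stmt7 {K m n : ℕ} (hmn : m ≤ n) (σ : Fin K → Equiv.Perm (Fin n))
    (w : Fin m → ℂ)
    (T : Fin K → Matrix (Fin m) (Fin n) ℂ)
    (hT : ∀ i, T i = restrictM m n * permM (σ i))
    (Q : Fin K → Matrix (Fin m) (Fin n) ℂ)
    (hQ : ∀ i, Q i = Matrix.diagonal w * T i)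
    (i : Fin K) :
    T i * (∑ j : Fin K, (Q j)ᴴ * Q j) * (T i)ᴴ =
      Matrix.diagonal
        ((T i).mulVec (∑ j : Fin K, (T j)ᴴ.mulVec (fun k => (‖w k‖ : ℂ) ^ 2))) ∧
    ∀ k, 0 ≤ ((T i).mulVec (∑ j : Fin K, (T j)ᴴ.mulVec (fun k => (‖w k‖ : ℂ) ^ 2))) k :=
  stmt7_general σ w T hT Q hQ i
end
end

section
/- With Q_i = diag(w)T_i, 𝒬² = blockdiag(T_i Q*Q T_i*) and ℙ = Q Q* (where Q stacks the Q_i), the total pairwise frame discrepancy satisfies (1/2) Σ_{i,j} ‖T_j* Q_j T_i* z_i − T_i* Q_i T_j* z_j‖² = z*(𝒬² − ℙ) z for all z ∈ ℂ^{Km²}. -/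
open Matrix BigOperators

noncomputable section

/-!
Expanding each squared norm gives the terms `z_iᴴ T_i Q_jᴴ Q_j T_iᴴ z_i` (using `T_j T_jᴴ = 1`)
and the cross terms `z_iᴴ T_i Q_jᴴ T_j T_iᴴ Q_i T_jᴴ z_j`. Each `T_i` selects coordinates, so
`T_iᴴ diag(v) T_i` is diagonal for every `v` and these matrices commute: moving `T_iᴴ diag(w) T_i`
past `T_jᴴ diag(w̄) T_j` and cancelling `T_i T_iᴴ = T_j T_jᴴ = 1` turns the cross term into
`z_iᴴ Q_i Q_jᴴ z_j`. Summing over `i, j` and symmetrising gives the identity.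
-/

theorem Matrix.IsDiag.commute {ι R : Type*} [Fintype ι] [DecidableEq ι] [CommSemiring R]
    {A B : Matrix ι ι R} (hA : A.IsDiag) (hB : B.IsDiag) : Commute A B := by
  rw [← hA.diagonal_diag, ← hB.diagonal_diag]
  exact commute_diagonal _ _

theorem sum_norm_sq_eq_star_dotProduct_self {ι : Type*} [Fintype ι] (v : ι → ℂ) :
    ∑ k, (‖v k‖ : ℂ) ^ 2 = star v ⬝ᵥ v :=
  Finset.sum_congr rfl fun k _ => (Complex.conj_mul' (v k)).symm

theorem star_mulVec_dotProduct_mulVec {R l m n : Type*} [CommSemiring R] [StarRing R]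
    [Fintype l] [Fintype m] [Fintype n] (M : Matrix l m R) (N : Matrix l n R) (x : m → R)
    (y : n → R) : star (M *ᵥ x) ⬝ᵥ (N *ᵥ y) = star x ⬝ᵥ ((Mᴴ * N) *ᵥ y) := by
  rw [star_mulVec, dotProduct_mulVec, dotProduct_mulVec, vecMul_vecMul]

theorem half_sum_sum_add_swap_sub_sub_swap {K ι : Type*} [Field K] [CharZero K] [Fintype ι]
    (F G : ι → ι → K) :
    (1 / 2 : K) * ∑ i, ∑ j, (F i j + F j i - G i j - G j i) =
      ∑ i, ∑ j, F i j - ∑ i, ∑ j, G i j := by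
  simp only [Finset.sum_sub_distrib, Finset.sum_add_distrib]
  rw [Finset.sum_comm (f := fun i j => F j i), Finset.sum_comm (f := fun i j => G j i)]
  ring

section Selection

variable {R ι κ : Type*} [CommSemiring R] [StarRing R] [DecidableEq ι] [DecidableEq κ]

theorem submatrix_one_mul_conjTranspose_self [Fintype κ] {e : ι → κ}
    (he : Function.Injective e) :
    (1 : Matrix κ κ R).submatrix e id * ((1 : Matrix κ κ R).submatrix e id)ᴴ = 1 := by
  rw [conjTranspose_submatrix, conjTranspose_one, ← submatrix_mul _ _ _ _ _ Function.bijective_id,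
    Matrix.mul_one, submatrix_one e he]

theorem isDiag_conjTranspose_submatrix_one_mul_diagonal_mul [Fintype ι] (e : ι → κ)
    (v : ι → R) :
    (((1 : Matrix κ κ R).submatrix e id)ᴴ * diagonal v *
      (1 : Matrix κ κ R).submatrix e id).IsDiag := by
  intro s t hst
  rw [mul_apply]
  simp only [mul_diagonal, conjTranspose_apply, submatrix_apply, one_apply, id]
  refine Finset.sum_eq_zero fun k _ => ?_
  split_ifs <;> simp_all

end Selection

theorem restrictM_mul_permM_s8 {m n : ℕ} (hmn : m ≤ n) (σ : Equiv.Perm (Fin n)) :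
    restrictM m n * permM σ =
      (1 : Matrix (Fin n) (Fin n) ℂ).submatrix (σ.symm ∘ Fin.castLE hmn) id := by
  ext k t
  have hk (x : Fin n) : ((k : ℕ) = x) ↔ Fin.castLE hmn k = x := by simp [Fin.ext_iff]
  simp only [restrictM, permM, mul_apply, of_apply, hk, ite_mul, one_mul, zero_mul,
    Finset.sum_ite_eq, Finset.mem_univ, if_true, submatrix_apply, one_apply, id,
    Function.comp_apply]
  simp_rw [Equiv.symm_apply_eq, eq_comm (a := σ t)]

section Gram

variable {R l m n : Type*} [CommSemiring R] [StarRing R] [Fintype m] [Fintype n] [DecidableEq m]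

theorem conjTranspose_mul_self_of_mul_conjTranspose_eq_one {A B : Matrix m n R}
    {C : Matrix l n R} (hB : B * Bᴴ = 1) :
    (Bᴴ * (A * Cᴴ))ᴴ * (Bᴴ * (A * Cᴴ)) = C * (Aᴴ * A) * Cᴴ := by
  calc (Bᴴ * (A * Cᴴ))ᴴ * (Bᴴ * (A * Cᴴ)) = C * Aᴴ * (B * Bᴴ) * A * Cᴴ := by
        simp only [conjTranspose_mul, conjTranspose_conjTranspose, Matrix.mul_assoc]
    _ = C * (Aᴴ * A) * Cᴴ := by rw [hB, Matrix.mul_one, Matrix.mul_assoc C]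

theorem conjTranspose_mul_of_commute {A B : Matrix m n R} {w : m → R} (hA : A * Aᴴ = 1)
    (hB : B * Bᴴ = 1) (hcomm : Commute (Bᴴ * diagonal (star w) * B) (Aᴴ * diagonal w * A)) :
    (Bᴴ * (diagonal w * B * Aᴴ))ᴴ * (Aᴴ * (diagonal w * A * Bᴴ)) =
      diagonal w * A * (diagonal w * B)ᴴ := by
  calc (Bᴴ * (diagonal w * B * Aᴴ))ᴴ * (Aᴴ * (diagonal w * A * Bᴴ))
      = A * ((Bᴴ * diagonal (star w) * B) * (Aᴴ * diagonal w * A)) * Bᴴ := by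
        simp only [conjTranspose_mul, conjTranspose_conjTranspose, diagonal_conjTranspose,
          Matrix.mul_assoc]
    _ = A * ((Aᴴ * diagonal w * A) * (Bᴴ * diagonal (star w) * B)) * Bᴴ := by rw [hcomm.eq]
    _ = (A * Aᴴ) * diagonal w * A * Bᴴ * diagonal (star w) * (B * Bᴴ) := by
        simp only [Matrix.mul_assoc]
    _ = diagonal w * A * (diagonal w * B)ᴴ := by
        rw [hA, hB, Matrix.one_mul, Matrix.mul_one]
        simp only [conjTranspose_mul, diagonal_conjTranspose, Matrix.mul_assoc]

end Gram

theorem sum_sum_norm_sq_discrepancy {ι m n : Type*} [Fintype ι] [Fintype m] [Fintype n]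
    [DecidableEq m] [DecidableEq n] {T Q : ι → Matrix m n ℂ} {w : m → ℂ}
    (hTT : ∀ i, T i * (T i)ᴴ = 1)
    (hdiag : ∀ i (v : m → ℂ), ((T i)ᴴ * diagonal v * T i).IsDiag)
    (hQ : ∀ i, Q i = diagonal w * T i) (z : ι → m → ℂ) :
    (1 / 2 : ℂ) * ∑ i, ∑ j, ∑ k,
        (‖((T j)ᴴ.mulVec ((Q j).mulVec ((T i)ᴴ.mulVec (z i))) -
            (T i)ᴴ.mulVec ((Q i).mulVec ((T j)ᴴ.mulVec (z j)))) k‖ : ℂ) ^ 2 =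
      (∑ i, star (z i) ⬝ᵥ (T i * (∑ l, (Q l)ᴴ * Q l) * (T i)ᴴ).mulVec (z i)) -
        ∑ i, ∑ j, star (z i) ⬝ᵥ (Q i * (Q j)ᴴ).mulVec (z j) := by
  have hcross (i j : ι) :
      ((T j)ᴴ * (Q j * (T i)ᴴ))ᴴ * ((T i)ᴴ * (Q i * (T j)ᴴ)) = Q i * (Q j)ᴴ := by
    rw [hQ, hQ]
    exact conjTranspose_mul_of_commute (hTT i) (hTT j) ((hdiag j (star w)).commute (hdiag i w))
  let F i j := star (z i) ⬝ᵥ (T i * ((Q j)ᴴ * Q j) * (T i)ᴴ) *ᵥ z i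
  let G i j := star (z i) ⬝ᵥ (Q i * (Q j)ᴴ) *ᵥ z j
  have hterm (i j : ι) : ∑ k, (‖((T j)ᴴ *ᵥ Q j *ᵥ (T i)ᴴ *ᵥ z i -
      (T i)ᴴ *ᵥ Q i *ᵥ (T j)ᴴ *ᵥ z j) k‖ : ℂ) ^ 2 = F i j + F j i - G i j - G j i := by
    rw [sum_norm_sq_eq_star_dotProduct_self, star_sub, sub_dotProduct, dotProduct_sub,
      dotProduct_sub]
    simp only [mulVec_mulVec, star_mulVec_dotProduct_mulVec,
      conjTranspose_mul_self_of_mul_conjTranspose_eq_one (hTT _), hcross, F, G]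
    ring
  have hF (i : ι) :
      ∑ j, F i j = star (z i) ⬝ᵥ (T i * (∑ l, (Q l)ᴴ * Q l) * (T i)ᴴ) *ᵥ z i := by
    simp only [F, Matrix.mul_sum, Matrix.sum_mul, sum_mulVec, dotProduct_sum]
  simp only [hterm, half_sum_sum_add_swap_sub_sub_swap, hF, G]

theorem stmt8 {K m n : ℕ} (hmn : m ≤ n) (σ : Fin K → Equiv.Perm (Fin n))
    (w : Fin m → ℂ)
    (T : Fin K → Matrix (Fin m) (Fin n) ℂ)
    (hT : ∀ i, T i = restrictM m n * permM (σ i))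
    (Q : Fin K → Matrix (Fin m) (Fin n) ℂ)
    (hQ : ∀ i, Q i = Matrix.diagonal w * T i)
    (z : Fin K → Fin m → ℂ) :
    (1 / 2 : ℂ) * ∑ i : Fin K, ∑ j : Fin K, ∑ k : Fin n,
        (‖((T j)ᴴ.mulVec ((Q j).mulVec ((T i)ᴴ.mulVec (z i))) -
            (T i)ᴴ.mulVec ((Q i).mulVec ((T j)ᴴ.mulVec (z j)))) k‖ : ℂ) ^ 2 =
      (∑ i : Fin K, star (z i) ⬝ᵥ (T i * (∑ l : Fin K, (Q l)ᴴ * Q l) * (T i)ᴴ).mulVec (z i)) -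
        ∑ i : Fin K, ∑ j : Fin K, star (z i) ⬝ᵥ (Q i * (Q j)ᴴ).mulVec (z j) := by
  have hsel (i : Fin K) :
      T i = (1 : Matrix (Fin n) (Fin n) ℂ).submatrix ((σ i).symm ∘ Fin.castLE hmn) id :=
    (hT i).trans (restrictM_mul_permM_s8 hmn (σ i))
  refine sum_sum_norm_sq_discrepancy (fun i => ?_) (fun i v => ?_) hQ z <;> rw [hsel i]
  · exact submatrix_one_mul_conjTranspose_self
      ((σ i).symm.injective.comp (Fin.castLE_injective hmn))
  · exact isDiag_conjTranspose_submatrix_one_mul_diagonal_mul _ v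
end
end

section
/- With Q = diag(Sw)T, the pairwise discrepancy quadratic form z*(𝒬² − QQ*)z can be rewritten as a quadratic form in the probe: z*(𝒬² − QQ*)z = w* S* [diag(T T* |z|²) − diag(z) T T* diag(z̄)] S w, for all z ∈ ℂ^{Km²} and w ∈ ℂ^{m²}. -/
open Matrix BigOperators

noncomputable section

/-!
Put `A = T Tᴴ`, `x = z` and `y = S w` (the probe repeated in every frame). The left side expands to
`∑ p q, A p q (|x p|² |y q|² - x̄ p y p ȳ q x q)` and the right side to the same sum with `x` and `y`
exchanged. Swapping `p` and `q` identifies the two, because `T` has real entries, so `A` is symmetric.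
-/

section DiscrepancyMatrix

variable {ι R : Type*} [Fintype ι] [DecidableEq ι] [CommRing R] [StarRing R]

def discrepancyMatrix (A : Matrix ι ι R) (y : ι → R) : Matrix ι ι R :=
  diagonal (A *ᵥ (star y * y)) - diagonal y * A * diagonal (star y)

theorem star_dotProduct_discrepancyMatrix_mulVec (A : Matrix ι ι R) (x y : ι → R) :
    star x ⬝ᵥ (discrepancyMatrix A y *ᵥ x) =
      ∑ p, ∑ q, A p q * (star (x p) * x p * (star (y q) * y q) -
        star (x p) * y p * star (y q) * x q) := by
  have h_diagonal (p : ι) : (diagonal (A *ᵥ (star y * y)) *ᵥ x) p =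
      ∑ q, A p q * (star (y q) * y q) * x p := by
    rw [mulVec_diagonal, mulVec, dotProduct, Finset.sum_mul]
    rfl
  have h_sandwich (p : ι) : ((diagonal y * A * diagonal (star y)) *ᵥ x) p =
      ∑ q, y p * A p q * star (y q) * x q := by
    simp only [mulVec, dotProduct, mul_diagonal, diagonal_mul, Pi.star_apply]
  simp only [discrepancyMatrix, dotProduct, sub_mulVec, Pi.sub_apply, h_diagonal, h_sandwich,
    Pi.star_apply, mul_sub, Finset.mul_sum, ← Finset.sum_sub_distrib]
  refine Finset.sum_congr rfl fun p _ => Finset.sum_congr rfl fun q _ => ?_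
  ring

theorem star_dotProduct_discrepancyMatrix_mulVec_comm {A : Matrix ι ι R} (hA : Aᵀ = A)
    (x y : ι → R) :
    star x ⬝ᵥ (discrepancyMatrix A y *ᵥ x) = star y ⬝ᵥ (discrepancyMatrix A x *ᵥ y) := by
  rw [star_dotProduct_discrepancyMatrix_mulVec, star_dotProduct_discrepancyMatrix_mulVec,
    Finset.sum_comm]
  refine Finset.sum_congr rfl fun p _ => Finset.sum_congr rfl fun q _ => ?_
  rw [show A q p = A p q from congr_fun₂ hA p q]
  ring

end DiscrepancyMatrix

theorem Matrix.star_dotProduct_conjTranspose_mul_mul_mulVec {m n R : Type*} [Fintype m]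
    [Fintype n] [CommSemiring R] [StarRing R] (S : Matrix m n R) (D : Matrix m m R)
    (w : n → R) :
    star w ⬝ᵥ ((Sᴴ * D * S) *ᵥ w) = star (S *ᵥ w) ⬝ᵥ (D *ᵥ (S *ᵥ w)) := by
  rw [← mulVec_mulVec, ← mulVec_mulVec, dotProduct_mulVec, star_mulVec]

theorem stackM_mulVec {K m : ℕ} (v : Fin m → ℂ) : stackM K m *ᵥ v = fun p => v p.2 := by
  ext p
  simp [stackM, mulVec, dotProduct]

theorem Tstack_conjTranspose {K m n : ℕ} (σ : Fin K → Equiv.Perm (Fin n)) :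
    (Tstack K m n σ)ᴴ = (Tstack K m n σ)ᵀ := by
  ext j p
  simp [Tstack, restrictM, permM, mul_apply, apply_ite star]

theorem Tstack_mul_conjTranspose_transpose {K m n : ℕ} (σ : Fin K → Equiv.Perm (Fin n)) :
    (Tstack K m n σ * (Tstack K m n σ)ᴴ)ᵀ = Tstack K m n σ * (Tstack K m n σ)ᴴ := by
  rw [Tstack_conjTranspose, transpose_mul, transpose_transpose]

theorem stmt13_general {K m n : ℕ} (σ : Fin K → Equiv.Perm (Fin n))
    (w : Fin m → ℂ) (z : Fin K × Fin m → ℂ)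
    (Q : Matrix (Fin K × Fin m) (Fin n) ℂ)
    (hQ : Q = Matrix.diagonal ((stackM K m).mulVec w) * Tstack K m n σ) :
    star z ⬝ᵥ
        ((Matrix.diagonal ((Tstack K m n σ).mulVec ((Tstack K m n σ)ᴴ.mulVec
            ((stackM K m).mulVec (fun k => (‖w k‖ : ℂ) ^ 2)))) - Q * Qᴴ).mulVec z) =
      star w ⬝ᵥ
        (((stackM K m)ᴴ *
            (Matrix.diagonal ((Tstack K m n σ).mulVec ((Tstack K m n σ)ᴴ.mulVec
                (fun p => (‖z p‖ : ℂ) ^ 2))) -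
              Matrix.diagonal z * Tstack K m n σ * (Tstack K m n σ)ᴴ *
                Matrix.diagonal (star z)) * stackM K m).mulVec w) := by
  set T := Tstack K m n σ
  set y := stackM K m *ᵥ w
  have hy : stackM K m *ᵥ (fun k => (‖w k‖ : ℂ) ^ 2) = star y * y := by
    simp only [y, stackM_mulVec]
    exact funext fun p => (Complex.conj_mul' (w p.2)).symm
  have hz : (fun p => (‖z p‖ : ℂ) ^ 2) = star z * z :=
    funext fun p => (Complex.conj_mul' (z p)).symm
  have hQQ : Q * Qᴴ = diagonal y * (T * Tᴴ) * diagonal (star y) := by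
    rw [hQ, conjTranspose_mul, diagonal_conjTranspose, Matrix.mul_assoc, Matrix.mul_assoc,
      Matrix.mul_assoc]
  rw [hy, hz, hQQ, mulVec_mulVec, mulVec_mulVec, Matrix.mul_assoc (diagonal z),
    star_dotProduct_conjTranspose_mul_mul_mulVec]
  exact star_dotProduct_discrepancyMatrix_mulVec_comm (Tstack_mul_conjTranspose_transpose σ) z y

theorem stmt13 {K m n : ℕ} (hmn : m ≤ n) (σ : Fin K → Equiv.Perm (Fin n))
    (w : Fin m → ℂ) (z : Fin K × Fin m → ℂ)
    (Q : Matrix (Fin K × Fin m) (Fin n) ℂ)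
    (hQ : Q = Matrix.diagonal ((stackM K m).mulVec w) * Tstack K m n σ) :
    star z ⬝ᵥ
        ((Matrix.diagonal ((Tstack K m n σ).mulVec ((Tstack K m n σ)ᴴ.mulVec
            ((stackM K m).mulVec (fun k => (‖w k‖ : ℂ) ^ 2)))) - Q * Qᴴ).mulVec z) =
      star w ⬝ᵥ
        (((stackM K m)ᴴ *
            (Matrix.diagonal ((Tstack K m n σ).mulVec ((Tstack K m n σ)ᴴ.mulVec
                (fun p => (‖z p‖ : ℂ) ^ 2))) -
              Matrix.diagonal z * Tstack K m n σ * (Tstack K m n σ)ᴴ *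
                Matrix.diagonal (star z)) * stackM K m).mulVec w) :=
  stmt13_general σ w z Q hQ
end
end

section
/- The matrix D − A is positive semidefinite, where D = diag(S*(T T* |z|²)) and A = S* diag(z) T T* diag(z̄) S, for any z ∈ ℂ^{Km²}. -/
open Matrix BigOperators
open scoped ComplexOrder

noncomputable section

/-!
Put `P = T Tᴴ`, a Hermitian matrix with nonnegative entries. Since every row of `S` has a single
entry `1`, `D = Sᴴ diag(P |z|²) S`, so `D - A = Sᴴ L S` with
`L = diag(P |z|²) - diag(z) P diag(z̄)`, and it suffices that `L` is positive semidefinite.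
By the symmetry of `P`, twice the quadratic form of `L` is the Lagrange-type sum
`∑_{p,q} P p q |z q v p - z p v q|²`, which is nonnegative.
-/

lemma Fintype.sum_sum_add_swap {ι M : Type*} [Fintype ι] [AddCommMonoid M] (F : ι → ι → M) :
    ∑ p, ∑ q, (F p q + F q p) = ∑ p, ∑ q, F p q + ∑ p, ∑ q, F p q := by
  simp only [Finset.sum_add_distrib]
  rw [Finset.sum_comm (f := fun p q => F q p)]

namespace Matrix

section Laplacian

variable {𝕜 ι κ : Type*} [RCLike 𝕜] [Fintype ι]

/-- For `z = 1` this is the graph Laplacian `diag(P 1) - P` of the weights `P`; the vector `z`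
twists the edge `(p, q)` by `z p * conj (z q)`. -/
def connectionLaplacian [DecidableEq ι] (P : Matrix ι ι 𝕜) (z : ι → 𝕜) : Matrix ι ι 𝕜 :=
  diagonal (P *ᵥ fun q => (‖z q‖ : 𝕜) ^ 2) - diagonal z * P * diagonal (star z)

lemma star_dotProduct_connectionLaplacian_mulVec [DecidableEq ι] (P : Matrix ι ι 𝕜)
    (z v : ι → 𝕜) :
    star v ⬝ᵥ connectionLaplacian P z *ᵥ v = ∑ p, ∑ q,
      (P p q * (star (z q) * z q * (star (v p) * v p)) -
        star (v p) * z p * P p q * star (z q) * v q) := by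
  simp only [connectionLaplacian, dotProduct, mulVec, sub_apply, mul_diagonal, diagonal_mul,
    diagonal_apply, Pi.star_apply, sub_mul, mul_sub, Finset.sum_sub_distrib, ite_mul, zero_mul,
    Finset.sum_ite_eq, Finset.mem_univ, if_true, ← RCLike.conj_mul, Finset.mul_sum,
    Finset.sum_mul]
  congr 1 <;> refine Finset.sum_congr rfl fun p _ => Finset.sum_congr rfl fun q _ => ?_
  · simp only [RCLike.star_def]
    ring
  · ring

lemma star_dotProduct_connectionLaplacian_mulVec_of_symm [DecidableEq ι] {P : Matrix ι ι 𝕜}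
    (hP : ∀ p q, P q p = P p q) (z v : ι → 𝕜) :
    star v ⬝ᵥ connectionLaplacian P z *ᵥ v =
      2⁻¹ * ∑ p, ∑ q, P p q * (star (z q * v p - z p * v q) * (z q * v p - z p * v q)) := by
  rw [eq_inv_mul_iff_mul_eq₀ two_ne_zero, star_dotProduct_connectionLaplacian_mulVec, two_mul,
    ← Fintype.sum_sum_add_swap]
  refine Finset.sum_congr rfl fun p _ => Finset.sum_congr rfl fun q _ => ?_
  simp only [hP p q, star_sub, star_mul]
  ring

theorem PosSemidef.connectionLaplacian [DecidableEq ι] {P : Matrix ι ι 𝕜} (hP : P.IsHermitian)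
    (hP_nonneg : ∀ p q, 0 ≤ P p q) (z : ι → 𝕜) : (connectionLaplacian P z).PosSemidef := by
  have hsymm : ∀ p q, P q p = P p q := fun p q => by
    rw [← hP.apply p q, (IsSelfAdjoint.of_nonneg (hP_nonneg q p)).star_eq]
  refine .of_dotProduct_mulVec_nonneg ?_ fun v => ?_
  · refine (PosSemidef.diagonal fun p => ?_).isHermitian.sub ?_
    · exact Finset.sum_nonneg fun q _ => mul_nonneg (hP_nonneg p q) (by positivity)
    · simpa only [diagonal_conjTranspose] using isHermitian_mul_mul_conjTranspose (diagonal z) hP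
  · rw [star_dotProduct_connectionLaplacian_mulVec_of_symm hsymm]
    exact mul_nonneg (by positivity) <| Finset.sum_nonneg fun p _ => Finset.sum_nonneg fun q _ =>
      mul_nonneg (hP_nonneg p q) (star_mul_self_nonneg _)

lemma mul_conjTranspose_self_apply_nonneg {T : Matrix κ ι 𝕜}
    (hT : ∀ i j, 0 ≤ T i j) (p q : κ) : 0 ≤ (T * Tᴴ) p q :=
  Finset.sum_nonneg fun j _ => mul_nonneg (hT p j) (star_nonneg_iff.mpr (hT q j))

end Laplacian

def selectionMatrix {ι κ R : Type*} [DecidableEq κ] [Zero R] [One R] (g : ι → κ) :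
    Matrix ι κ R :=
  of fun p j => if g p = j then 1 else 0

theorem conjTranspose_selectionMatrix_mul_diagonal_mul {ι κ R : Type*} [Fintype ι]
    [DecidableEq ι] [DecidableEq κ] [Semiring R] [StarRing R] (g : ι → κ) (y : ι → R) :
    (selectionMatrix (R := R) g)ᴴ * diagonal y * selectionMatrix (R := R) g =
      diagonal ((selectionMatrix (R := R) g)ᴴ *ᵥ y) := by
  ext i j
  rw [mul_apply]
  simp only [selectionMatrix, mul_diagonal, diagonal_apply, mulVec, dotProduct,
    conjTranspose_apply, of_apply, apply_ite star, star_one, star_zero, ite_mul, one_mul, zero_mul]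
  split_ifs with hij
  · subst hij
    exact Finset.sum_congr rfl fun p _ => by split_ifs <;> simp_all
  · exact Finset.sum_eq_zero fun p _ => by split_ifs <;> simp_all

end Matrix

lemma Tstack_apply_nonneg {K m n : ℕ} (σ : Fin K → Equiv.Perm (Fin n)) (p : Fin K × Fin m)
    (j : Fin n) : 0 ≤ Tstack K m n σ p j := by
  simp only [Tstack, restrictM, permM, of_apply, mul_apply]
  exact Finset.sum_nonneg fun k _ =>
    mul_nonneg (ite_nonneg zero_le_one le_rfl) (ite_nonneg zero_le_one le_rfl)

theorem stmt14_general {K m n : ℕ} (σ : Fin K → Equiv.Perm (Fin n))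
    (z : Fin K × Fin m → ℂ) :
    (Matrix.diagonal ((stackM K m)ᴴ.mulVec ((Tstack K m n σ).mulVec
        ((Tstack K m n σ)ᴴ.mulVec (fun p => (‖z p‖ : ℂ) ^ 2)))) -
      (stackM K m)ᴴ * Matrix.diagonal z * Tstack K m n σ * (Tstack K m n σ)ᴴ *
        Matrix.diagonal (star z) * stackM K m).PosSemidef := by
  set S := stackM K m
  set T := Tstack K m n σ
  have hD : diagonal (Sᴴ *ᵥ (T *ᵥ (Tᴴ *ᵥ fun p => (‖z p‖ : ℂ) ^ 2))) =
      Sᴴ * diagonal ((T * Tᴴ) *ᵥ fun p => (‖z p‖ : ℂ) ^ 2) * S := by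
    rw [mulVec_mulVec (M := T)]
    exact (conjTranspose_selectionMatrix_mul_diagonal_mul (R := ℂ)
      (Prod.snd : Fin K × Fin m → Fin m) _).symm
  have hA : Sᴴ * diagonal z * T * Tᴴ * diagonal (star z) * S =
      Sᴴ * (diagonal z * (T * Tᴴ) * diagonal (star z)) * S := by
    simp only [Matrix.mul_assoc]
  rw [hD, hA, ← Matrix.sub_mul, ← Matrix.mul_sub]
  exact (PosSemidef.connectionLaplacian (isHermitian_mul_conjTranspose_self T)
    (mul_conjTranspose_self_apply_nonneg (Tstack_apply_nonneg σ)) z).conjTranspose_mul_mul_same S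

theorem stmt14 {K m n : ℕ} (hmn : m ≤ n) (σ : Fin K → Equiv.Perm (Fin n))
    (z : Fin K × Fin m → ℂ) :
    (Matrix.diagonal ((stackM K m)ᴴ.mulVec ((Tstack K m n σ).mulVec
        ((Tstack K m n σ)ᴴ.mulVec (fun p => (‖z p‖ : ℂ) ^ 2)))) -
      (stackM K m)ᴴ * Matrix.diagonal z * Tstack K m n σ * (Tstack K m n σ)ᴴ *
        Matrix.diagonal (star z) * stackM K m).PosSemidef :=
  stmt14_general σ z
end
end

section
/- If z = Qψ exactly (consistent frames), then the true probe w satisfies A w = D w, i.e., w is an eigenvector of D^{-1}A with eigenvalue 1, where D = diag(S*(T T*|z|²)) and A = S* diag(z) T T* diag(z̄) S (assuming all diagonal entries of D are positive). -/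
open Matrix BigOperators

noncomputable section

/-
Both the stacking matrix `S` and the frame extraction `T` are selection matrices `v ↦ v ∘ f`,
so the consistent data is the pointwise product `z = (w ∘ snd) · (ψ ∘ F)`. The adjoint of a
selection matrix obeys the projection formula `Tᴴ ((v ∘ F) · x) = v · Tᴴ x`, hence the factor
`ψ ∘ F` of `z` can be moved inside `T Tᴴ`, where it combines with `z̄ · (w ∘ snd)` into `|z|²`:
`diag(z) T Tᴴ diag(z̄) S w = (w ∘ snd) · T Tᴴ |z|²`. Pulling `w ∘ snd` out through `Sᴴ` by the
same formula leaves `w · Sᴴ T Tᴴ |z|² = D w`.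
-/

section Selection

variable {ι κ R : Type*} [DecidableEq κ]

lemma diagonal_mulVec_eq_mul [Fintype κ] [NonUnitalNonAssocSemiring R] (v x : κ → R) :
    diagonal v *ᵥ x = v * x :=
  funext (mulVec_diagonal v x)

lemma one_submatrix_mulVec [Fintype κ] [NonAssocSemiring R] (f : ι → κ) (v : κ → R) :
    (1 : Matrix κ κ R).submatrix f id *ᵥ v = v ∘ f := by
  ext p
  simp [mulVec, dotProduct, one_apply]

-- The projection formula for the selection matrix `v ↦ v ∘ f`.
lemma conjTranspose_one_submatrix_mulVec_comp_mul [Fintype ι] [CommSemiring R] [StarRing R]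
    (f : ι → κ) (v : κ → R) (x : ι → R) :
    ((1 : Matrix κ κ R).submatrix f id)ᴴ *ᵥ ((v ∘ f) * x) =
      v * (((1 : Matrix κ κ R).submatrix f id)ᴴ *ᵥ x) := by
  ext j
  simp only [conjTranspose_submatrix, conjTranspose_one, mulVec, dotProduct, submatrix_apply,
    one_apply, Pi.mul_apply, Function.comp_apply, id, Finset.mul_sum]
  refine Finset.sum_congr rfl fun p _ => ?_
  split_ifs with h
  · rw [h]; ring
  · simp

lemma comp_mul_one_submatrix_mulVec_conjTranspose_mulVec [Fintype ι] [Fintype κ]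
    [CommSemiring R] [StarRing R] (f : ι → κ) (v : κ → R) (x : ι → R) :
    (v ∘ f) * ((1 : Matrix κ κ R).submatrix f id *ᵥ
        (((1 : Matrix κ κ R).submatrix f id)ᴴ *ᵥ x)) =
      (1 : Matrix κ κ R).submatrix f id *ᵥ
        (((1 : Matrix κ κ R).submatrix f id)ᴴ *ᵥ ((v ∘ f) * x)) := by
  rw [one_submatrix_mulVec, one_submatrix_mulVec, conjTranspose_one_submatrix_mulVec_comp_mul]
  rfl

end Selection

lemma stackM_eq_one_submatrix (K m : ℕ) :
    stackM K m = (1 : Matrix (Fin m) (Fin m) ℂ).submatrix Prod.snd id := by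
  ext p j
  simp [stackM, one_apply]

-- The object pixel that frame `p.1` shows at probe pixel `p.2`.
def frameIndex {K m n : ℕ} (hmn : m ≤ n) (σ : Fin K → Equiv.Perm (Fin n)) :
    Fin K × Fin m → Fin n :=
  fun p => (σ p.1).symm (Fin.castLE hmn p.2)

lemma Tstack_eq_one_submatrix {K m n : ℕ} (hmn : m ≤ n) (σ : Fin K → Equiv.Perm (Fin n)) :
    Tstack K m n σ = (1 : Matrix (Fin n) (Fin n) ℂ).submatrix (frameIndex hmn σ) id := by
  ext p j
  rw [Tstack, of_apply, mul_apply, Finset.sum_eq_single (σ p.1 j)]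
  · simp [restrictM, permM, frameIndex, one_apply, Equiv.eq_symm_apply, Fin.ext_iff, eq_comm]
  · intro b _ hb
    simp [permM, Ne.symm hb]
  · simp

open scoped ComplexOrder

theorem stmt15_general {K m n : ℕ} (hmn : m ≤ n) (σ : Fin K → Equiv.Perm (Fin n))
    (w : Fin m → ℂ) (ψ : Fin n → ℂ) (z : Fin K × Fin m → ℂ)
    (hz : z = (Matrix.diagonal ((stackM K m).mulVec w) * Tstack K m n σ).mulVec ψ)
    (D A : Matrix (Fin m) (Fin m) ℂ)
    (hD : D = Matrix.diagonal ((stackM K m)ᴴ.mulVec ((Tstack K m n σ).mulVec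
        ((Tstack K m n σ)ᴴ.mulVec (fun p => (‖z p‖ : ℂ) ^ 2)))))
    (hA : A = (stackM K m)ᴴ * Matrix.diagonal z * Tstack K m n σ * (Tstack K m n σ)ᴴ *
        Matrix.diagonal (star z) * stackM K m) :
    A.mulVec w = D.mulVec w := by
  rw [stackM_eq_one_submatrix, Tstack_eq_one_submatrix hmn] at hz hD hA
  set S := (1 : Matrix (Fin m) (Fin m) ℂ).submatrix Prod.snd id
  set T := (1 : Matrix (Fin n) (Fin n) ℂ).submatrix (frameIndex hmn σ) id
  have hSw : S *ᵥ w = w ∘ Prod.snd := one_submatrix_mulVec _ w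
  have hz' : z = (w ∘ Prod.snd) * (ψ ∘ frameIndex hmn σ) := by
    rw [hz, ← mulVec_mulVec, diagonal_mulVec_eq_mul, hSw, one_submatrix_mulVec]
  have hnorm_sq : (fun p => (‖z p‖ : ℂ) ^ 2) =
      (ψ ∘ frameIndex hmn σ) * (star z * (w ∘ Prod.snd)) := by
    ext p
    rw [← Complex.mul_conj', hz']
    simp only [Pi.mul_apply, Pi.star_apply, RCLike.star_def]
    ring
  calc A *ᵥ w
      = Sᴴ *ᵥ ((w ∘ Prod.snd) *
          ((ψ ∘ frameIndex hmn σ) * (T *ᵥ (Tᴴ *ᵥ (star z * (w ∘ Prod.snd)))))) := by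
        simp only [hA, ← mulVec_mulVec, diagonal_mulVec_eq_mul, hSw, hz', mul_assoc]
    _ = Sᴴ *ᵥ ((w ∘ Prod.snd) * (T *ᵥ (Tᴴ *ᵥ fun p => (‖z p‖ : ℂ) ^ 2))) := by
        rw [comp_mul_one_submatrix_mulVec_conjTranspose_mulVec, hnorm_sq]
    _ = D *ᵥ w := by
        rw [conjTranspose_one_submatrix_mulVec_comp_mul, hD, diagonal_mulVec_eq_mul, mul_comm]

theorem stmt15 {K m n : ℕ} (hmn : m ≤ n) (σ : Fin K → Equiv.Perm (Fin n))
    (w : Fin m → ℂ) (ψ : Fin n → ℂ) (z : Fin K × Fin m → ℂ)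
    (hz : z = (Matrix.diagonal ((stackM K m).mulVec w) * Tstack K m n σ).mulVec ψ)
    (D A : Matrix (Fin m) (Fin m) ℂ)
    (hD : D = Matrix.diagonal ((stackM K m)ᴴ.mulVec ((Tstack K m n σ).mulVec
        ((Tstack K m n σ)ᴴ.mulVec (fun p => (‖z p‖ : ℂ) ^ 2)))))
    (hA : A = (stackM K m)ᴴ * Matrix.diagonal z * Tstack K m n σ * (Tstack K m n σ)ᴴ *
        Matrix.diagonal (star z) * stackM K m)
    (hpos : ∀ k, 0 < ((stackM K m)ᴴ.mulVec ((Tstack K m n σ).mulVec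
        ((Tstack K m n σ)ᴴ.mulVec (fun p => (‖z p‖ : ℂ) ^ 2)))) k) :
    A.mulVec w = D.mulVec w :=
  stmt15_general hmn σ w ψ z hz D A hD hA
end
end
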